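/- Let m ≥ 2 be an integer and let t = ⌊(m-1)/2⌋. Then Σ_{j=t+1}^{m-1} 2^j·C(m-1, j) - Σ_{j=0}^{t-1} 2^{j+1}·C(m-1, j) > 0. -/

import Mathlib

/-! The reflection `j ↦ n - j` (with `n = m - 1`) sends `{0, …, t - 1}` into `{t + 1, …, n}`, and
since `j + 1 < n - j` there, it raises each term `2^(j+1) C(n, j)` of the subtracted sum strictly
to the term `2^(n-j) C(n, n-j)` of the first sum. When `t = 0` the subtracted sum is empty. -/

open Finset

theorem two_pow_succ_mul_choose_lt_two_pow_mul_choose_sub {n j : ℕ} (hj : 2 * j + 2 ≤ n) :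
    2 ^ (j + 1) * n.choose j < 2 ^ (n - j) * n.choose (n - j) := by
  rw [Nat.choose_symm (by omega)]
  exact Nat.mul_lt_mul_of_pos_right (Nat.pow_lt_pow_right (by norm_num) (by omega))
    (Nat.choose_pos (by omega))

theorem sum_range_two_pow_succ_mul_choose_lt {n t : ℕ} (hn : 0 < n) (ht : 2 * t ≤ n) :
    ∑ j ∈ range t, 2 ^ (j + 1) * n.choose j < ∑ k ∈ Icc (t + 1) n, 2 ^ k * n.choose k := by
  rcases t.eq_zero_or_pos with rfl | ht0
  · rw [sum_range_zero]
    exact sum_pos (fun k hk => Nat.mul_pos (by positivity) (Nat.choose_pos (mem_Icc.1 hk).2))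
      ⟨n, mem_Icc.2 ⟨hn, le_rfl⟩⟩
  have hreflect : (range t).image (n - ·) ⊆ Icc (t + 1) n := by
    intro k hk
    obtain ⟨j, hj, rfl⟩ := mem_image.1 hk
    simp only [mem_range] at hj
    simp only [mem_Icc]
    omega
  calc ∑ j ∈ range t, 2 ^ (j + 1) * n.choose j
      < ∑ j ∈ range t, 2 ^ (n - j) * n.choose (n - j) :=
        sum_lt_sum_of_nonempty (nonempty_range_iff.2 ht0.ne') fun j hj =>
          two_pow_succ_mul_choose_lt_two_pow_mul_choose_sub (by simp only [mem_range] at hj; omega)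
    _ = ∑ k ∈ (range t).image (n - ·), 2 ^ k * n.choose k := by
        rw [sum_image fun a ha b hb hab => by simp only [coe_range, Set.mem_Iio] at ha hb; omega]
    _ ≤ ∑ k ∈ Icc (t + 1) n, 2 ^ k * n.choose k := sum_le_sum_of_subset hreflect

theorem stmt_2 (m : ℕ) (hm : 2 ≤ m) :
    0 < ∑ j ∈ Finset.Icc ((m - 1) / 2 + 1) (m - 1), (2 : ℤ) ^ j * ((m - 1).choose j : ℤ)
        - ∑ j ∈ Finset.range ((m - 1) / 2), (2 : ℤ) ^ (j + 1) * ((m - 1).choose j : ℤ) := by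
  rw [sub_pos]
  exact_mod_cast sum_range_two_pow_succ_mul_choose_lt (n := m - 1) (t := (m - 1) / 2)
    (by omega) (by omega)
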